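/- The class of positroids is closed under the operation M ↦ { H ∈ M : j ∈ H } (when this is nonempty): if M is a positroid on [n] and j is a non-fixed point of its decorated permutation, then M' = { H ∈ M : j ∈ H } is itself a positroid, with Grassmann necklace K_a = (I_a \ {phi(a)}) ∪ {j} where phi(a) = j if j ∈ I_a and phi(a) = max_a(I_a \ I_j) otherwise. -/

import Mathlib

/-!
Everything works for an arbitrary Grassmann necklace `I` with `j ∈ I j`, which holds for the
necklace of `P` because `j` is not fixed.

A family of sets is a Grassmann necklace exactly when `I a \ {a} ⊆ I (a + 1)` and all `I a` have
the same size; for `K` both follow directly from the maximality defining `φ`.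

`K t` is obtained from `I t` by exchanging `φ(t)` for the later element `j`, so `I t ≤_t K t`; and
`j ∈ K (j + 1)` forces `j ∈ H`, as `j` is last in the order starting at `j + 1`. Conversely, in the
counting form of the Gale order the only thresholds `v` where `K t ≤_t H` asks more than
`I t ≤_t H` lie strictly between `φ(t)` and `j`. There the elements of `I t` in `[v, j)` belong to
`I j` by the maximality of `φ(t)`, so the Gale condition at `j` bounds them, and `j ∈ H` supplies
the missing element.
-/

open Finset

/-- Position of `a` in the cyclic (linear) order starting at `t` on `Fin n`. -/
def cval {n : ℕ} (t a : Fin n) : ℕ := ((a - t : Fin n) : ℕ)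

/-- Gale order on finsets of `Fin n` induced by the linear order with key `f`:
compare the sorted lists of keys coordinatewise. -/
def galeLEKey {n : ℕ} (f : Fin n → ℕ) (A B : Finset (Fin n)) : Prop :=
  List.Forall₂ (· ≤ ·) ((A.image f).sort (· ≤ ·)) ((B.image f).sort (· ≤ ·))

/-- Gale order `≤_t` induced by the cyclic order starting at `t`. -/
def galeLE {n : ℕ} (t : Fin n) (A B : Finset (Fin n)) : Prop :=
  galeLEKey (cval t) A B

/-- The set of maximal elements of `D` w.r.t. `≤_a` (a singleton when `D` is nonempty). -/
def cmax {n : ℕ} (a : Fin n) (D : Finset (Fin n)) : Finset (Fin n) :=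
  D.filter (fun x => ∀ y ∈ D, cval a y ≤ cval a x)

/-- The set of minimal elements of `D` w.r.t. `≤_a` (a singleton when `D` is nonempty). -/
def cmin {n : ℕ} (a : Fin n) (D : Finset (Fin n)) : Finset (Fin n) :=
  D.filter (fun x => ∀ y ∈ D, cval a x ≤ cval a y)

/-- A Grassmann necklace on `[n]`. -/
def IsGrassmannNecklace {n : ℕ} [NeZero n] (I : Fin n → Finset (Fin n)) : Prop :=
  ∀ i : Fin n,
    (i ∈ I i → ∃ j : Fin n, I (i + 1) = insert j (I i \ {i})) ∧
    (i ∉ I i → I (i + 1) = I i)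

/-- A decorated permutation: a permutation with fixed points colored by `1` or `-1`
(non-fixed points carry the dummy color `1`). -/
structure DecoratedPerm (n : ℕ) where
  π : Equiv.Perm (Fin n)
  col : Fin n → ℤ
  col_fixed : ∀ i, π i = i → col i = 1 ∨ col i = -1
  col_nonfixed : ∀ i, π i ≠ i → col i = 1

/-- The Grassmann necklace associated to a decorated permutation:
`I_r = { i : i <_r π⁻¹(i), or π(i) = i and col(i) = -1 }`. -/
def necklaceOf {n : ℕ} (P : DecoratedPerm n) : Fin n → Finset (Fin n) :=
  fun r => Finset.univ.filter
    (fun i => cval r i < cval r (P.π.symm i) ∨ (P.π i = i ∧ P.col i = -1))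

/-- The forward map from Grassmann necklaces to decorated permutations:
`P` corresponds to the necklace `I`. -/
def Corresponds {n : ℕ} [NeZero n] (I : Fin n → Finset (Fin n)) (P : DecoratedPerm n) : Prop :=
  ∀ i : Fin n,
    ((I (i + 1) = I i ∧ i ∉ I i) → (P.π i = i ∧ P.col i = 1)) ∧
    ((I (i + 1) = I i ∧ i ∈ I i) → (P.π i = i ∧ P.col i = -1)) ∧
    (∀ j : Fin n, j ≠ i → i ∈ I i → I (i + 1) = insert j (I i \ {i}) → P.π i = j)

/-- `phiSet I j a` is `{j}` if `j ∈ I_a`, and otherwise `{max_a (I_a \ I_j)}`. -/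
def phiSet {n : ℕ} (I : Fin n → Finset (Fin n)) (j a : Fin n) : Finset (Fin n) :=
  if j ∈ I a then {j} else cmax a (I a \ I j)

/-- One pass of the contraction algorithm (fuel-indexed; the loop walks `a ← a+1`). -/
def contractLoop {n : ℕ} [NeZero n] (π : Equiv.Perm (Fin n)) (j : Fin n) :
    ℕ → (Fin n → Fin n) → (Fin n → ℤ) → Fin n → Fin n →
      (Fin n → Fin n) × (Fin n → ℤ)
  | 0, μ, c, q, a => (Function.update μ a q, c)
  | fuel + 1, μ, c, q, a =>
    if π a = j then (Function.update μ a q, c)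
    else if q = a ∨ (cval (a + 1) q < cval (a + 1) (π a) ∧
                      cval (a + 1) (π a) < cval (a + 1) j) then
      contractLoop π j fuel (Function.update μ a q)
        (if q = a then Function.update c a 1 else c) (π a) (a + 1)
    else
      contractLoop π j fuel μ c q (a + 1)

/-- The contraction algorithm: output `(μ, col')` from `(π, col)` and `j`. -/
def contractAlg {n : ℕ} [NeZero n] (π : Equiv.Perm (Fin n)) (col : Fin n → ℤ) (j : Fin n) :
    (Fin n → Fin n) × (Fin n → ℤ) :=
  contractLoop π j n (Function.update (⇑π) j j) (Function.update col j 1) (π j) (j + 1)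

/-- One pass of the restriction algorithm (the loop walks `a ← a-1`). -/
def restrictLoop {n : ℕ} [NeZero n] (π : Equiv.Perm (Fin n)) (j : Fin n) :
    ℕ → (Fin n → Fin n) → (Fin n → ℤ) → Fin n → Fin n →
      (Fin n → Fin n) × (Fin n → ℤ)
  | 0, μ, c, q, a => (Function.update μ a q, c)
  | fuel + 1, μ, c, q, a =>
    if π a = j then (Function.update μ a q, c)
    else if q = a ∨ (cval a j < cval a (π a) ∧ cval a (π a) < cval a q) then
      restrictLoop π j fuel (Function.update μ a q)
        (if q = a then Function.update c a 1 else c) (π a) (a - 1)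
    else
      restrictLoop π j fuel μ c q (a - 1)

/-- The restriction algorithm: output `(μ, col')` from `(π, col)` and `j`. -/
def restrictAlg {n : ℕ} [NeZero n] (π : Equiv.Perm (Fin n)) (col : Fin n → ℤ) (j : Fin n) :
    (Fin n → Fin n) × (Fin n → ℤ) :=
  restrictLoop π j n (Function.update (⇑π) j j) (Function.update col j 1) (π j) (j - 1)


lemma cval_lt {n : ℕ} (t a : Fin n) : cval t a < n := (a - t).isLt

section Cval
variable {n : ℕ} [NeZero n]

@[simp] lemma cval_self (t : Fin n) : cval t t = 0 := by simp [cval]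

lemma cval_injective (t : Fin n) : Function.Injective (cval t) := fun _ _ h =>
  sub_left_inj.1 (Fin.val_injective h)

lemma cval_eq_zero_iff {t a : Fin n} : cval t a = 0 ↔ a = t := by
  rw [← cval_self t, (cval_injective t).eq_iff]

open Fin.CommRing in
lemma add_cval (a b : Fin n) : a + ((cval a b : ℕ) : Fin n) = b := by
  rw [cval, Fin.cast_val_eq_self, add_sub_cancel]

open Fin.CommRing in
lemma cval_add_natCast (t : Fin n) {k : ℕ} (hk : k < n) : cval t (t + (k : Fin n)) = k := by
  simp [cval, Nat.mod_eq_of_lt hk]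

lemma cval_eq_sub_of_le {t j x : Fin n} (h : cval t j ≤ cval t x) :
    cval j x = cval t x - cval t j := by
  rw [cval, show x - j = (x - t) - (j - t) by abel, Fin.coe_sub_iff_le.2 h]
  rfl

lemma cval_eq_add_sub_of_lt {t j x : Fin n} (h : cval t x < cval t j) :
    cval j x = n + cval t x - cval t j := by
  rw [cval, show x - j = (x - t) - (j - t) by abel, Fin.coe_sub_iff_lt.2 h]
  rfl

lemma cval_add_one (a x : Fin n) : cval (a + 1) x = if x = a then n - 1 else cval a x - 1 := by
  obtain ⟨m, rfl⟩ := Nat.exists_eq_succ_of_ne_zero (NeZero.ne n)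
  rw [cval, show x - (a + 1) = (x - a) - 1 by abel, Fin.coe_sub_one]
  simp [cval, sub_eq_zero]

lemma cval_add_one_self (a : Fin n) : cval (a + 1) a = n - 1 := by
  rw [cval_add_one, if_pos rfl]

lemma cval_add_one_of_ne {a x : Fin n} (h : x ≠ a) : cval (a + 1) x = cval a x - 1 := by
  rw [cval_add_one, if_neg h]

/-- Going from `t` to `j`, the interval `[v, j)` of the `t`-order becomes a final segment. -/
lemma add_sub_le_cval_iff {t j x : Fin n} {v : ℕ} :
    n + v - cval t j ≤ cval j x ↔ v ≤ cval t x ∧ cval t x < cval t j := by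
  have := cval_lt t x
  have := cval_lt t j
  rcases lt_or_ge (cval t x) (cval t j) with h | h
  · rw [cval_eq_add_sub_of_lt h]
    omega
  · rw [cval_eq_sub_of_le h]
    omega

end Cval

section SortedList
variable {α : Type*} [LinearOrder α]

lemma List.Forall₂.countP_le {l₁ l₂ : List α} (h : List.Forall₂ (· ≤ ·) l₁ l₂) (v : α) :
    l₁.countP (v ≤ ·) ≤ l₂.countP (v ≤ ·) := by
  induction h with
  | nil => rfl
  | @cons a b _ _ hab _ ih =>
    simp only [List.countP_cons, decide_eq_true_eq]
    have : v ≤ a → v ≤ b := fun h => h.trans hab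
    exact Nat.add_le_add ih (by split_ifs <;> simp_all)

lemma List.Pairwise.length_sub_le_countP {l : List α} (hl : l.Pairwise (· ≤ ·)) {i : ℕ}
    (hi : i < l.length) : l.length - i ≤ l.countP (l[i] ≤ ·) := by
  have hdrop : (l.drop i).countP (l[i] ≤ ·) = (l.drop i).length := by
    refine List.countP_eq_length.2 fun a ha => ?_
    obtain ⟨k, hk, rfl⟩ := List.getElem_of_mem ha
    simp only [List.getElem_drop, decide_eq_true_eq]
    rcases (Nat.le_add_right i k).eq_or_lt with h | h
    · simp [← h]
    · exact hl.rel_get_of_lt (a := ⟨i, hi⟩) (b := ⟨i + k, by simp at hk; omega⟩) h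
  have := List.countP_append (l₁ := l.take i) (l₂ := l.drop i) (p := (l[i] ≤ ·))
  rw [List.take_append_drop] at this
  simp only [List.length_drop] at hdrop
  omega

lemma List.Pairwise.countP_le_length_sub {l : List α} (hl : l.Pairwise (· ≤ ·)) {i : ℕ}
    (hi : i < l.length) {v : α} (hv : l[i] < v) : l.countP (v ≤ ·) ≤ l.length - (i + 1) := by
  have htake : (l.take (i + 1)).countP (v ≤ ·) = 0 := by
    refine List.countP_eq_zero.2 fun a ha => ?_
    obtain ⟨k, hk, rfl⟩ := List.getElem_of_mem ha
    simp only [List.length_take] at hk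
    simp only [List.getElem_take, decide_eq_true_eq, not_le]
    rcases (show k ≤ i by omega).eq_or_lt with h | h
    · simpa [h] using hv
    · exact lt_of_le_of_lt (hl.rel_get_of_lt (a := ⟨k, by omega⟩) (b := ⟨i, hi⟩) h) hv
  have := List.countP_append (l₁ := l.take (i + 1)) (l₂ := l.drop (i + 1)) (p := (v ≤ ·))
  rw [List.take_append_drop] at this
  have := List.countP_le_length (l := l.drop (i + 1)) (p := (v ≤ ·))
  simp only [List.length_drop] at this
  omega

lemma forall₂_le_iff_countP_le {l₁ l₂ : List α} (h₁ : l₁.Pairwise (· ≤ ·))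
    (h₂ : l₂.Pairwise (· ≤ ·)) (hlen : l₁.length = l₂.length) :
    List.Forall₂ (· ≤ ·) l₁ l₂ ↔ ∀ v, l₁.countP (v ≤ ·) ≤ l₂.countP (v ≤ ·) := by
  refine ⟨List.Forall₂.countP_le, fun h => List.forall₂_iff_get.2 ⟨hlen, fun i hi₁ hi₂ => ?_⟩⟩
  by_contra! hlt
  have := h₁.length_sub_le_countP hi₁
  have := h₂.countP_le_length_sub hi₂ hlt
  have := h l₁[i]
  simp only [List.get_eq_getElem] at *
  omega

end SortedList

lemma card_insert_sdiff_singleton {α : Type*} [DecidableEq α] {A : Finset α} {m j : α}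
    (hm : m ∈ A) (hj : j ∉ A) : #(insert j (A \ {m})) = #A := by
  rw [sdiff_singleton_eq_erase, card_insert_of_notMem fun h => hj (mem_of_mem_erase h),
    card_erase_add_one hm]

lemma card_filter_insert_sdiff_singleton {α : Type*} [DecidableEq α] {A : Finset α} {m j : α}
    (hm : m ∈ A) (hj : j ∉ A) (p : α → Prop) [DecidablePred p] :
    #{x ∈ insert j (A \ {m}) | p x} + (if p m then 1 else 0) =
      #{x ∈ A | p x} + (if p j then 1 else 0) := by
  have hj' : j ∉ A \ {m} := fun h => hj (mem_sdiff.1 h).1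
  rw [card_filter, card_filter, sum_insert hj', sdiff_singleton_eq_erase, add_assoc,
    sum_erase_add _ _ hm, add_comm]

section GaleKey
variable {n : ℕ} {f : Fin n → ℕ}

lemma countP_sort_image (hf : Function.Injective f) (A : Finset (Fin n)) (v : ℕ) :
    ((A.image f).sort (· ≤ ·)).countP (v ≤ ·) = #{x ∈ A | v ≤ f x} := by
  rw [(sort_perm_toList _ _).countP_eq, ← Multiset.coe_countP, coe_toList,
    Multiset.countP_eq_card_filter, ← filter_val, filter_image, ← card_def,
    card_image_of_injective _ hf]

lemma galeLEKey_iff (hf : Function.Injective f) {A B : Finset (Fin n)} :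
    galeLEKey f A B ↔ #A = #B ∧ ∀ v, #{x ∈ A | v ≤ f x} ≤ #{x ∈ B | v ≤ f x} := by
  have hlen (C : Finset (Fin n)) : ((C.image f).sort (· ≤ ·)).length = #C := by
    rw [length_sort, card_image_of_injective _ hf]
  simp only [galeLEKey, ← countP_sort_image hf]
  constructor
  · intro h
    exact ⟨by rw [← hlen A, ← hlen B]; exact h.length_eq, h.countP_le⟩
  · rintro ⟨hcard, hcount⟩
    exact (forall₂_le_iff_countP_le (pairwise_sort _ _) (pairwise_sort _ _)
      (by rw [hlen, hlen, hcard])).2 hcount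

lemma galeLEKey_trans (hf : Function.Injective f) {A B C : Finset (Fin n)}
    (h₁ : galeLEKey f A B) (h₂ : galeLEKey f B C) : galeLEKey f A C := by
  rw [galeLEKey_iff hf] at *
  exact ⟨h₁.1.trans h₂.1, fun v => (h₁.2 v).trans (h₂.2 v)⟩

lemma galeLEKey_insert_sdiff_singleton (hf : Function.Injective f) {A : Finset (Fin n)}
    {m j : Fin n} (hm : m ∈ A) (hj : j ∉ A) (hle : f m ≤ f j) :
    galeLEKey f A (insert j (A \ {m})) := by
  refine (galeLEKey_iff hf).2 ⟨(card_insert_sdiff_singleton hm hj).symm, fun v => ?_⟩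
  have := card_filter_insert_sdiff_singleton hm hj (v ≤ f ·)
  have : v ≤ f m → v ≤ f j := fun h => h.trans hle
  split_ifs at * <;> omega

end GaleKey

section Necklace
variable {n : ℕ} [NeZero n] {I : Fin n → Finset (Fin n)}

lemma IsGrassmannNecklace.sdiff_subset (hI : IsGrassmannNecklace I) (a : Fin n) :
    I a \ {a} ⊆ I (a + 1) := by
  by_cases ha : a ∈ I a
  · obtain ⟨x, hx⟩ := (hI a).1 ha
    exact hx ▸ subset_insert _ _
  · rw [(hI a).2 ha]
    exact Finset.sdiff_subset

lemma IsGrassmannNecklace.card_add_one_le (hI : IsGrassmannNecklace I) (a : Fin n) :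
    #(I (a + 1)) ≤ #(I a) := by
  by_cases ha : a ∈ I a
  · obtain ⟨x, hx⟩ := (hI a).1 ha
    rw [hx, ← card_erase_add_one ha, ← sdiff_singleton_eq_erase]
    exact card_insert_le _ _
  · rw [(hI a).2 ha]

open Fin.CommRing in
/-- Cardinalities can only drop along the cycle, hence they are constant. -/
lemma IsGrassmannNecklace.card_eq (hI : IsGrassmannNecklace I) (a b : Fin n) :
    #(I a) = #(I b) := by
  have card_add_le (a : Fin n) (k : ℕ) : #(I (a + (k : Fin n))) ≤ #(I a) := by
    induction k with
    | zero => simp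
    | succ k ih => rw [Nat.cast_succ, ← add_assoc]; exact (hI.card_add_one_le _).trans ih
  exact le_antisymm (add_cval b a ▸ card_add_le b _) (add_cval a b ▸ card_add_le a _)

lemma IsGrassmannNecklace.eq_of_mem_of_notMem_add_one (hI : IsGrassmannNecklace I) {a x : Fin n}
    (h : x ∈ I a) (h' : x ∉ I (a + 1)) : x = a := by
  by_contra hne
  exact h' (hI.sdiff_subset a (mem_sdiff.2 ⟨h, by simpa using hne⟩))

lemma isGrassmannNecklace_iff :
    IsGrassmannNecklace I ↔ ∀ a, I a \ {a} ⊆ I (a + 1) ∧ #(I (a + 1)) = #(I a) := by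
  refine ⟨fun hI a => ⟨hI.sdiff_subset a, hI.card_eq _ _⟩, fun h a => ⟨fun ha => ?_, fun ha => ?_⟩⟩
  · obtain ⟨x, -, hx⟩ := exists_eq_insert_iff.2
      ⟨(h a).1, by rw [(h a).2, sdiff_singleton_eq_erase, card_erase_add_one ha]⟩
    exact ⟨x, hx.symm⟩
  · have hsub := (h a).1
    rw [sdiff_singleton_eq_erase, erase_eq_of_notMem ha] at hsub
    exact (eq_of_subset_of_card_le hsub (h a).2.le).symm

open Fin.CommRing in
/-- The walk `t, t + 1, …, j` only removes the elements it passes. -/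
lemma IsGrassmannNecklace.mem_of_cval_lt (hI : IsGrassmannNecklace I) {t j x : Fin n}
    (hx : x ∈ I t) (h : cval t j < cval t x) : x ∈ I j := by
  have mem_add (k : ℕ) (hk : k ≤ cval t j) : x ∈ I (t + (k : Fin n)) := by
    induction k with
    | zero => simpa using hx
    | succ k ih =>
      have hkn : k < n := by have := cval_lt t j; omega
      rw [Nat.cast_succ, ← add_assoc]
      refine hI.sdiff_subset _ (mem_sdiff.2 ⟨ih (by omega), fun hxk => ?_⟩)
      rw [mem_singleton.1 hxk, cval_add_natCast t hkn] at h
      omega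
  simpa [add_cval] using mem_add _ le_rfl

end Necklace

section NecklaceOf
variable {n : ℕ} (P : DecoratedPerm n)

lemma mem_necklaceOf {r x : Fin n} :
    x ∈ necklaceOf P r ↔ cval r x < cval r (P.π.symm x) ∨ (P.π x = x ∧ P.col x = -1) := by
  simp [necklaceOf]

variable [NeZero n]

lemma self_mem_necklaceOf {a : Fin n} (h : P.π a ≠ a) : a ∈ necklaceOf P a := by
  rw [mem_necklaceOf, cval_self, pos_iff_ne_zero, Ne, cval_eq_zero_iff, P.π.symm_apply_eq]
  exact Or.inl fun h' => h h'.symm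

lemma mem_necklaceOf_add_one_iff {a x : Fin n} (hxa : x ≠ a) (hx : x ≠ P.π a) :
    x ∈ necklaceOf P (a + 1) ↔ x ∈ necklaceOf P a := by
  have hxa' : P.π.symm x ≠ a := fun h => hx (P.π.symm_apply_eq.1 h)
  have h₁ := cval_eq_zero_iff.not.2 hxa
  have h₂ := cval_eq_zero_iff.not.2 hxa'
  rw [mem_necklaceOf, mem_necklaceOf, cval_add_one_of_ne hxa, cval_add_one_of_ne hxa']
  exact or_congr_left (by omega)

lemma necklaceOf_add_one_of_ne {a : Fin n} (h : P.π a ≠ a) :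
    necklaceOf P (a + 1) = insert (P.π a) (necklaceOf P a \ {a}) := by
  ext x
  rw [mem_insert, mem_sdiff, mem_singleton]
  by_cases hx : x = P.π a
  · subst hx
    simp only [true_or, iff_true, mem_necklaceOf, Equiv.symm_apply_apply, cval_add_one,
      if_neg h, if_pos]
    have := cval_lt a (P.π a)
    exact Or.inl (by omega)
  by_cases hxa : x = a
  · subst hxa
    have := cval_lt (x + 1) (P.π.symm x)
    simp only [mem_necklaceOf, cval_add_one_self, h, hx, false_and, or_false, not_true_eq_false,
      and_false, or_self, iff_false, not_lt]
    omega
  · rw [mem_necklaceOf_add_one_iff P hxa hx]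
    tauto

lemma necklaceOf_add_one_of_eq {a : Fin n} (h : P.π a = a) :
    necklaceOf P (a + 1) = necklaceOf P a := by
  ext x
  by_cases hxa : x = a
  · subst hxa
    simp only [mem_necklaceOf, P.π.symm_apply_eq.2 h.symm, lt_irrefl]
  · exact mem_necklaceOf_add_one_iff P hxa (h.symm ▸ hxa)

lemma isGrassmannNecklace_necklaceOf : IsGrassmannNecklace (necklaceOf P) := by
  intro a
  by_cases h : P.π a = a
  · rw [necklaceOf_add_one_of_eq P h]
    exact ⟨fun ha => ⟨a, (insert_sdiff_self_of_mem ha).symm⟩, fun _ => rfl⟩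
  · rw [necklaceOf_add_one_of_ne P h]
    exact ⟨fun _ => ⟨_, rfl⟩, fun ha => absurd (self_mem_necklaceOf P h) ha⟩

end NecklaceOf

section Contraction
variable {n : ℕ} {I : Fin n → Finset (Fin n)} {j : Fin n}

def contractNecklace (I : Fin n → Finset (Fin n)) (j a : Fin n) : Finset (Fin n) :=
  insert j (I a \ phiSet I j a)

lemma contractNecklace_of_mem {a : Fin n} (h : j ∈ I a) : contractNecklace I j a = I a := by
  rw [contractNecklace, phiSet, if_pos h, insert_sdiff_self_of_mem h]

variable [NeZero n]

lemma exists_contractNecklace_eq_of_notMem (hI : IsGrassmannNecklace I) (hj : j ∈ I j)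
    {a : Fin n} (h : j ∉ I a) :
    ∃ m ∈ I a \ I j, (∀ y ∈ I a \ I j, cval a y ≤ cval a m) ∧
      contractNecklace I j a = insert j (I a \ {m}) := by
  have hne : (I a \ I j).Nonempty := by
    rw [sdiff_nonempty]
    intro hsub
    exact h (eq_of_subset_of_card_le hsub (hI.card_eq j a).le ▸ hj)
  obtain ⟨m, hm, hmax⟩ := exists_max_image _ (cval a) hne
  refine ⟨m, hm, hmax, ?_⟩
  have hcmax : cmax a (I a \ I j) = {m} := by
    ext x
    simp only [cmax, mem_filter, mem_singleton]
    constructor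
    · rintro ⟨hx, hxmax⟩
      exact cval_injective a (le_antisymm (hmax x hx) (hxmax m hm))
    · rintro rfl
      exact ⟨hm, hmax⟩
  rw [contractNecklace, phiSet, if_neg h, hcmax]

lemma cval_lt_of_mem_sdiff (hI : IsGrassmannNecklace I) {a m : Fin n} (h : j ∉ I a)
    (hm : m ∈ I a \ I j) : cval a m < cval a j := by
  rw [mem_sdiff] at hm
  rcases lt_trichotomy (cval a m) (cval a j) with hlt | heq | hgt
  · exact hlt
  · exact absurd (cval_injective a heq ▸ hm.1) h
  · exact absurd (hI.mem_of_cval_lt hm.1 hgt) hm.2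

lemma card_contractNecklace (hI : IsGrassmannNecklace I) (hj : j ∈ I j) (a : Fin n) :
    #(contractNecklace I j a) = #(I a) := by
  by_cases h : j ∈ I a
  · rw [contractNecklace_of_mem h]
  · obtain ⟨m, hm, -, hK⟩ := exists_contractNecklace_eq_of_notMem hI hj h
    rw [hK, card_insert_sdiff_singleton (mem_sdiff.1 hm).1 h]

lemma contractNecklace_sdiff_subset (hI : IsGrassmannNecklace I) (hj : j ∈ I j) (a : Fin n) :
    contractNecklace I j a \ {a} ⊆ contractNecklace I j (a + 1) := by
  intro x hx
  rw [mem_sdiff, mem_singleton] at hx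
  obtain ⟨hxK, hxa⟩ := hx
  by_cases hxj : x = j
  · exact hxj ▸ mem_insert_self _ _
  have hxI : x ∈ I a \ phiSet I j a := by simpa [contractNecklace, hxj] using hxK
  have hxI' : x ∈ I (a + 1) := hI.sdiff_subset a (mem_sdiff.2 ⟨(mem_sdiff.1 hxI).1, by simpa⟩)
  by_cases hj' : j ∈ I (a + 1)
  · rwa [contractNecklace_of_mem hj']
  obtain ⟨m', hm', hmax', hK'⟩ := exists_contractNecklace_eq_of_notMem hI hj hj'
  rw [hK', mem_insert, mem_sdiff, mem_singleton]
  refine Or.inr ⟨hxI', fun hxm' => ?_⟩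
  subst hxm'
  have hxIj : x ∉ I j := (mem_sdiff.1 hm').2
  have hja : j ∉ I a := fun hja =>
    hxIj (hI.eq_of_mem_of_notMem_add_one hja hj' ▸ (mem_sdiff.1 hxI).1)
  obtain ⟨m, hm, hmax, hK⟩ := exists_contractNecklace_eq_of_notMem hI hj hja
  have hxm : x ≠ m := by
    rw [hK] at hxK
    exact (by simpa [hxj] using hxK : x ∈ I a ∧ x ≠ m).2
  -- `x` is `a`-below `m` in `I a \ I j`, so `m ≠ a` and `m` survives into `I (a + 1)`,
  -- where it is still `(a + 1)`-above `x`, against the maximality of `x`.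
  have hlt : cval a x < cval a m :=
    lt_of_le_of_ne (hmax x (mem_sdiff.2 ⟨(mem_sdiff.1 hxI).1, hxIj⟩)) ((cval_injective a).ne hxm)
  have hma : m ≠ a := by
    rintro rfl
    simp at hlt
  have hm'' := hmax' m (mem_sdiff.2
    ⟨hI.sdiff_subset a (mem_sdiff.2 ⟨(mem_sdiff.1 hm).1, by simpa⟩), (mem_sdiff.1 hm).2⟩)
  have := cval_eq_zero_iff.not.2 hxa
  rw [cval_add_one_of_ne hma, cval_add_one_of_ne hxa] at hm''
  omega

lemma isGrassmannNecklace_contractNecklace (hI : IsGrassmannNecklace I) (hj : j ∈ I j) :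
    IsGrassmannNecklace (contractNecklace I j) :=
  isGrassmannNecklace_iff.2 fun a => ⟨contractNecklace_sdiff_subset hI hj a, by
    rw [card_contractNecklace hI hj, card_contractNecklace hI hj, hI.card_eq]⟩

end Contraction

section GaleContraction
variable {n : ℕ} [NeZero n] {I : Fin n → Finset (Fin n)} {j : Fin n}

lemma galeLE_contractNecklace (hI : IsGrassmannNecklace I) (hj : j ∈ I j) (t : Fin n) :
    galeLE t (I t) (contractNecklace I j t) := by
  by_cases h : j ∈ I t
  · rw [contractNecklace_of_mem h]
    exact (galeLEKey_iff (cval_injective t)).2 ⟨rfl, fun _ => le_rfl⟩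
  · obtain ⟨m, hm, -, hK⟩ := exists_contractNecklace_eq_of_notMem hI hj h
    rw [hK]
    exact galeLEKey_insert_sdiff_singleton (cval_injective t) (mem_sdiff.1 hm).1 h
      (cval_lt_of_mem_sdiff hI h hm).le

/-- `j` is the largest element for the order starting at `j + 1`. -/
lemma mem_of_galeLE_add_one {A H : Finset (Fin n)} (hjA : j ∈ A) (h : galeLE (j + 1) A H) :
    j ∈ H := by
  have hcount := ((galeLEKey_iff (cval_injective _)).1 h).2 (n - 1)
  have hA : 0 < #{x ∈ A | n - 1 ≤ cval (j + 1) x} :=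
    card_pos.2 ⟨j, mem_filter.2 ⟨hjA, (cval_add_one_self j).ge⟩⟩
  obtain ⟨x, hx⟩ := card_pos.1 (hA.trans_le hcount)
  obtain ⟨hxH, hxv⟩ := mem_filter.1 hx
  by_cases hxj : x = j
  · exact hxj ▸ hxH
  · have := cval_lt j x
    have := cval_eq_zero_iff.not.2 hxj
    rw [cval_add_one_of_ne hxj] at hxv
    omega

lemma card_filter_le_cval_eq_add (t j : Fin n) {v : ℕ} (hv : v ≤ cval t j) (S : Finset (Fin n)) :
    #{x ∈ S | v ≤ cval t x} =
      #{x ∈ S | n + v - cval t j ≤ cval j x} + #{x ∈ S | cval t j ≤ cval t x} := by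
  rw [← card_filter_add_card_filter_not (s := {x ∈ S | v ≤ cval t x})
    (fun x => cval t x < cval t j), filter_filter, filter_filter]
  congr 2 <;> refine filter_congr fun x _ => ?_
  · exact add_sub_le_cval_iff.symm
  · omega

lemma card_filter_cval_le_add_one_le {t j : Fin n} {A H : Finset (Fin n)} (hA : j ∉ A)
    (hH : j ∈ H)
    (h : #{x ∈ A | cval t j + 1 ≤ cval t x} ≤ #{x ∈ H | cval t j + 1 ≤ cval t x}) :
    #{x ∈ A | cval t j ≤ cval t x} + 1 ≤ #{x ∈ H | cval t j ≤ cval t x} := by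
  have hA' : {x ∈ A | cval t j ≤ cval t x} = {x ∈ A | cval t j + 1 ≤ cval t x} :=
    filter_congr fun x hx => by
      have : cval t x ≠ cval t j := (cval_injective t).ne fun h => hA (h ▸ hx)
      omega
  have hH' : insert j {x ∈ H | cval t j + 1 ≤ cval t x} ⊆ {x ∈ H | cval t j ≤ cval t x} := by
    refine insert_subset (mem_filter.2 ⟨hH, le_rfl⟩) fun x hx => ?_
    rw [mem_filter] at hx ⊢
    exact ⟨hx.1, by omega⟩
  have := card_le_card hH'
  rw [card_insert_of_notMem (by simp)] at this
  rw [hA']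
  omega

lemma galeLE_contractNecklace_of_galeLE (hI : IsGrassmannNecklace I) (hj : j ∈ I j)
    {H : Finset (Fin n)} (hjH : j ∈ H) (hIH : ∀ s, galeLE s (I s) H) (t : Fin n) :
    galeLE t (contractNecklace I j t) H := by
  by_cases h : j ∈ I t
  · rw [contractNecklace_of_mem h]
    exact hIH t
  obtain ⟨m, hm, hmax, hK⟩ := exists_contractNecklace_eq_of_notMem hI hj h
  have hmI := (mem_sdiff.1 hm).1
  have hmj := cval_lt_of_mem_sdiff hI h hm
  have hIH' s := (galeLEKey_iff (cval_injective s)).1 (hIH s)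
  rw [galeLE, hK, galeLEKey_iff (cval_injective t)]
  refine ⟨(card_insert_sdiff_singleton hmI h).trans (hIH' t).1, fun v => ?_⟩
  have hswap := card_filter_insert_sdiff_singleton hmI h (v ≤ cval t ·)
  have hIv := (hIH' t).2 v
  by_cases hv : v ≤ cval t m ∨ cval t j < v
  · split_ifs at hswap <;> omega
  rw [not_or, not_le, not_lt] at hv
  rw [if_neg hv.1.not_ge, if_pos hv.2] at hswap
  have hbefore : #{x ∈ I t | n + v - cval t j ≤ cval j x} ≤
      #{x ∈ H | n + v - cval t j ≤ cval j x} := by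
    refine le_trans (card_le_card fun x hx => ?_) ((hIH' j).2 _)
    rw [mem_filter] at hx ⊢
    refine ⟨by_contra fun hxj => ?_, hx.2⟩
    have := hmax x (mem_sdiff.2 ⟨hx.1, hxj⟩)
    have := add_sub_le_cval_iff.1 hx.2
    omega
  have hafter := card_filter_cval_le_add_one_le h hjH ((hIH' t).2 (cval t j + 1))
  have := card_filter_le_cval_eq_add t j hv.2 (I t)
  have := card_filter_le_cval_eq_add t j hv.2 H
  omega

theorem galeLE_contractNecklace_iff (hI : IsGrassmannNecklace I) (hj : j ∈ I j)
    (H : Finset (Fin n)) :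
    (j ∈ H ∧ ∀ t, galeLE t (I t) H) ↔ ∀ t, galeLE t (contractNecklace I j t) H :=
  ⟨fun ⟨hjH, hIH⟩ => galeLE_contractNecklace_of_galeLE hI hj hjH hIH,
    fun hK => ⟨mem_of_galeLE_add_one (mem_insert_self _ _) (hK (j + 1)),
      fun t => galeLEKey_trans (cval_injective t) (galeLE_contractNecklace hI hj t) (hK t)⟩⟩

end GaleContraction

/-- if `j` is a non-fixed point, then `M' = {H ∈ M : j ∈ H}` is itself a
positroid, with Grassmann necklace `K_a = (I_a \ {phi(a)}) ∪ {j}`. -/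
theorem contraction_is_positroid (n : ℕ) [NeZero n] (P : DecoratedPerm n) (j : Fin n)
    (hj : P.π j ≠ j) :
    IsGrassmannNecklace
      (fun a : Fin n => insert j (necklaceOf P a \ phiSet (necklaceOf P) j a)) ∧
    ∀ H : Finset (Fin n),
      (j ∈ H ∧ ∀ t : Fin n, galeLE t (necklaceOf P t) H) ↔
      (∀ t : Fin n,
        galeLE t (insert j (necklaceOf P t \ phiSet (necklaceOf P) j t)) H) :=
  ⟨isGrassmannNecklace_contractNecklace (isGrassmannNecklace_necklaceOf P)
      (self_mem_necklaceOf P hj),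
    galeLE_contractNecklace_iff (isGrassmannNecklace_necklaceOf P) (self_mem_necklaceOf P hj)⟩
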